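/- arXiv:2502.20051 — 2 statements merged into one kernel-verified Lean document; each statement's English description precedes it below -/
import Mathlib

section
/- Let U ⊆ ℝ_t × ℝ²_x be open and let h be C¹ and v¹, v² be C² real-valued functions on U satisfying the momentum equations B v¹ = v² − ∂₁h and B v² = −v¹ − ∂₂h on U. Then the vorticity ω = ∂₁v² − ∂₂v¹ satisfies the transport equation B ω = −(1 + ω)·div v on U. -/
/-- Partial derivative in the `i`-th coordinate direction of spacetime
`ℝ_t × ℝ²_x ≃ (Fin 3 → ℝ)`, coordinates `(x⁰, x¹, x²) = (t, x₁, x₂)`. -/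
noncomputable def pd (i : Fin 3) (f : (Fin 3 → ℝ) → ℝ) (x : Fin 3 → ℝ) : ℝ :=
  fderiv ℝ f x (Pi.single i 1)

/-- Material derivative `B = ∂ₜ + v¹∂₁ + v²∂₂`. -/
noncomputable def matD (v1 v2 f : (Fin 3 → ℝ) → ℝ) (x : Fin 3 → ℝ) : ℝ :=
  pd 0 f x + v1 x * pd 1 f x + v2 x * pd 2 f x

/-!
Differentiate the first momentum equation in `x₂`, the second in `x₁`, and subtract. Since
`∂ᵢ (B f) = B (∂ᵢ f) + ∂ᵢv¹ ∂₁f + ∂ᵢv² ∂₂f`, the commutator terms assemble into `ω · div v`,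
and the pressure terms cancel because `∂₂∂₁h = ∂₁∂₂h`. Here `h` is only `C¹`, but the momentum
equations make `∂₁h` and `∂₂h` differentiable, and symmetry of these two mixed partials needs
nothing more: restricted to the `(x₁, x₂)`-plane, the derivative of `h` is differentiable.
-/

open Filter Topology

theorem fderiv_fderiv_apply_comm_of_eventually {E F : Type*} [NormedAddCommGroup E]
    [NormedSpace ℝ E] [NormedAddCommGroup F] [NormedSpace ℝ F] {f : E → F} {x v w : E}
    (hf : ∀ᶠ y in 𝓝 x, DifferentiableAt ℝ f y)
    (hv : DifferentiableAt ℝ (fun y => fderiv ℝ f y v) x)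
    (hw : DifferentiableAt ℝ (fun y => fderiv ℝ f y w) x) :
    fderiv ℝ (fun y => fderiv ℝ f y v) x w = fderiv ℝ (fun y => fderiv ℝ f y w) x v := by
  set e₁ := ContinuousLinearMap.fst ℝ ℝ ℝ
  set e₂ := ContinuousLinearMap.snd ℝ ℝ ℝ
  set L : ℝ × ℝ →L[ℝ] E := e₁.smulRight v + e₂.smulRight w
  set ι : ℝ × ℝ → E := fun p => x + L p
  have hι : ∀ p, HasFDerivAt ι L p := fun p => L.hasFDerivAt.const_add x
  have hι0 : ι 0 = x := by simp [ι]
  set S₁ := ContinuousLinearMap.smulRightL ℝ (ℝ × ℝ) F e₁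
  set S₂ := ContinuousLinearMap.smulRightL ℝ (ℝ × ℝ) F e₂
  -- the derivative of `f ∘ ι`; unlike `fderiv ℝ f` it is differentiable at the base point
  set D : ℝ × ℝ → ℝ × ℝ →L[ℝ] F := fun p => S₁ (fderiv ℝ f (ι p) v) + S₂ (fderiv ℝ f (ι p) w)
  have hD : ∀ᶠ p in 𝓝 0, HasFDerivAt (f ∘ ι) (D p) p := by
    rw [← hι0] at hf
    filter_upwards [(hι 0).continuousAt.eventually hf] with p hp
    refine (hp.hasFDerivAt.comp p (hι p)).congr_fderiv ?_
    ext <;> simp [D, S₁, S₂, L]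
  have hD' : HasFDerivAt D (S₁.comp ((fderiv ℝ (fun y => fderiv ℝ f y v) x).comp L)
      + S₂.comp ((fderiv ℝ (fun y => fderiv ℝ f y w) x).comp L)) 0 := by
    rw [← hι0] at hv hw ⊢
    exact (S₁.hasFDerivAt.comp 0 (hv.hasFDerivAt.comp 0 (hι 0))).add
      (S₂.hasFDerivAt.comp 0 (hw.hasFDerivAt.comp 0 (hι 0)))
  simpa [S₁, S₂, L, e₁, e₂] using second_derivative_symmetric_of_eventually hD hD' (0, 1) (1, 0)

section pd

variable {f g : (Fin 3 → ℝ) → ℝ} {x : Fin 3 → ℝ} {i j : Fin 3}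

lemma pd_congr (hfg : f =ᶠ[𝓝 x] g) : pd i f x = pd i g x := by
  rw [pd, pd, hfg.fderiv_eq]

lemma pd_add (hf : DifferentiableAt ℝ f x) (hg : DifferentiableAt ℝ g x) :
    pd i (f + g) x = pd i f x + pd i g x := by
  simp [pd, fderiv_add hf hg]

lemma pd_sub (hf : DifferentiableAt ℝ f x) (hg : DifferentiableAt ℝ g x) :
    pd i (fun y => f y - g y) x = pd i f x - pd i g x := by
  simp [pd, fderiv_fun_sub hf hg]

lemma pd_neg : pd i (fun y => -f y) x = -pd i f x := by
  simp [pd, fderiv_fun_neg]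

lemma pd_mul (hf : DifferentiableAt ℝ f x) (hg : DifferentiableAt ℝ g x) :
    pd i (f * g) x = f x * pd i g x + g x * pd i f x := by
  simp [pd, fderiv_mul hf hg]

lemma pd_comm (hf : ∀ᶠ y in 𝓝 x, DifferentiableAt ℝ f y)
    (hi : DifferentiableAt ℝ (pd i f) x) (hj : DifferentiableAt ℝ (pd j f) x) :
    pd i (pd j f) x = pd j (pd i f) x :=
  fderiv_fderiv_apply_comm_of_eventually hf hj hi

lemma ContDiffAt.differentiableAt_pd (hf : ContDiffAt ℝ 2 f x) :
    DifferentiableAt ℝ (pd i f) x :=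
  ((hf.fderiv_right one_add_one_eq_two.le).differentiableAt one_ne_zero).clm_apply
    (differentiableAt_const _)

lemma ContDiffAt.pd_comm (hf : ContDiffAt ℝ 2 f x) : pd i (pd j f) x = pd j (pd i f) x :=
  _root_.pd_comm ((hf.eventually (by simp)).mono fun _ hy => hy.differentiableAt two_ne_zero)
    hf.differentiableAt_pd hf.differentiableAt_pd

variable {v1 v2 : (Fin 3 → ℝ) → ℝ}

lemma differentiableAt_matD (hv1 : DifferentiableAt ℝ v1 x) (hv2 : DifferentiableAt ℝ v2 x)
    (hf : ContDiffAt ℝ 2 f x) : DifferentiableAt ℝ (matD v1 v2 f) x :=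
  (hf.differentiableAt_pd.add (hv1.mul hf.differentiableAt_pd)).add
    (hv2.mul hf.differentiableAt_pd)

lemma matD_sub (hf : ContDiffAt ℝ 2 f x) (hg : ContDiffAt ℝ 2 g x) :
    matD v1 v2 (fun y => pd i f y - pd j g y) x
      = matD v1 v2 (pd i f) x - matD v1 v2 (pd j g) x := by
  simp only [matD, pd_sub hf.differentiableAt_pd hg.differentiableAt_pd]
  ring

lemma pd_matD (hv1 : DifferentiableAt ℝ v1 x) (hv2 : DifferentiableAt ℝ v2 x)
    (hf : ContDiffAt ℝ 2 f x) :
    pd i (matD v1 v2 f) x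
      = matD v1 v2 (pd i f) x + pd i v1 x * pd 1 f x + pd i v2 x * pd 2 f x := by
  have hdf (j : Fin 3) : DifferentiableAt ℝ (pd j f) x := hf.differentiableAt_pd
  change pd i (pd 0 f + v1 * pd 1 f + v2 * pd 2 f) x = matD v1 v2 (pd i f) x + _ + _
  rw [pd_add ((hdf 0).add (hv1.mul (hdf 1))) (hv2.mul (hdf 2)),
    pd_add (hdf 0) (hv1.mul (hdf 1)), pd_mul hv1 (hdf 1), pd_mul hv2 (hdf 2),
    hf.pd_comm (i := i) (j := 0), hf.pd_comm (i := i) (j := 1), hf.pd_comm (i := i) (j := 2), matD]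
  ring

end pd

/-- If `h` is `C¹` and `v¹, v²` are `C²` on an open set `U ⊆ ℝ_t × ℝ²_x` and satisfy the
momentum equations `B v¹ = v² − ∂₁h`, `B v² = −v¹ − ∂₂h` on `U`, then the vorticity
`ω = ∂₁v² − ∂₂v¹` satisfies `B ω = −(1 + ω) · div v` on `U`. -/
theorem vorticity_transport
    (U : Set (Fin 3 → ℝ)) (hU : IsOpen U)
    (h v1 v2 : (Fin 3 → ℝ) → ℝ)
    (hh : ContDiffOn ℝ 1 h U)
    (hv1 : ContDiffOn ℝ 2 v1 U) (hv2 : ContDiffOn ℝ 2 v2 U)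
    (hmom1 : ∀ x ∈ U, matD v1 v2 v1 x = v2 x - pd 1 h x)
    (hmom2 : ∀ x ∈ U, matD v1 v2 v2 x = -v1 x - pd 2 h x) :
    ∀ x ∈ U,
      matD v1 v2 (fun y => pd 1 v2 y - pd 2 v1 y) x
        = -(1 + (pd 1 v2 x - pd 2 v1 x)) * (pd 1 v1 x + pd 2 v2 x) := by
  intro x hx
  have hUx : U ∈ 𝓝 x := hU.mem_nhds hx
  have cv1 : ContDiffAt ℝ 2 v1 x := hv1.contDiffAt hUx
  have cv2 : ContDiffAt ℝ 2 v2 x := hv2.contDiffAt hUx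
  have dv1 : DifferentiableAt ℝ v1 x := cv1.differentiableAt two_ne_zero
  have dv2 : DifferentiableAt ℝ v2 x := cv2.differentiableAt two_ne_zero
  have dh : ∀ᶠ y in 𝓝 x, DifferentiableAt ℝ h y := eventually_of_mem hUx fun y hy =>
    (hh.contDiffAt (hU.mem_nhds hy)).differentiableAt one_ne_zero
  have hm1 : matD v1 v2 v1 =ᶠ[𝓝 x] fun y => v2 y - pd 1 h y := eventually_of_mem hUx hmom1
  have hm2 : matD v1 v2 v2 =ᶠ[𝓝 x] fun y => -v1 y - pd 2 h y := eventually_of_mem hUx hmom2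
  have dh1 : DifferentiableAt ℝ (pd 1 h) x := by
    simpa using dv2.fun_sub (hm1.differentiableAt_iff.mp (differentiableAt_matD dv1 dv2 cv1))
  have dh2 : DifferentiableAt ℝ (pd 2 h) x := by
    simpa using
      dv1.fun_neg.fun_sub (hm2.differentiableAt_iff.mp (differentiableAt_matD dv1 dv2 cv2))
  have E1 : pd 2 (matD v1 v2 v1) x = pd 2 v2 x - pd 2 (pd 1 h) x := by
    rw [pd_congr hm1, pd_sub dv2 dh1]
  have E2 : pd 1 (matD v1 v2 v2) x = -pd 1 v1 x - pd 1 (pd 2 h) x := by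
    rw [pd_congr hm2, pd_sub dv1.fun_neg dh2, pd_neg]
  rw [pd_matD dv1 dv2 cv1] at E1
  rw [pd_matD dv1 dv2 cv2] at E2
  rw [matD_sub cv2 cv1]
  linear_combination E2 - E1 + pd_comm dh dh2 dh1
end

section
/- Let Ū : ℝ → ℝ be differentiable and satisfy the 1D self-similar Burgers equation −½Ū(y) + ((3/2)y + Ū(y)) Ū′(y) = 0 for all y ∈ ℝ. Set ⟨x₂⟩ = (1 + x₂²)^{1/2} and define W̄(x₁, x₂) = ⟨x₂⟩ Ū( x₁ ⟨x₂⟩^{−3} ). Then W̄ is differentiable on ℝ² and solves the 2D self-similar Burgers equation −½ W̄ + ((3/2) x₁ + W̄) ∂_{x₁} W̄ + ½ x₂ ∂_{x₂} W̄ = 0 on ℝ². -/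
/-! For every differentiable `Ū`, the 2D self-similar Burgers operator applied to `W̄` at
`(x₁, x₂)` equals `⟨x₂⟩⁻¹` times the 1D operator applied to `Ū` at `y = x₁⟨x₂⟩⁻³`: by the chain
rule `∂₁W̄ = Ū′(y)⟨x₂⟩⁻²` and `∂₂W̄ = x₂⟨x₂⟩⁻¹Ū(y) − 3x₁x₂⟨x₂⟩⁻⁴Ū′(y)`, and the `x₂²` terms
coming from `½x₂∂₂W̄` recombine with the others through `⟨x₂⟩² = 1 + x₂²`. -/

/-- The 2D self-similar Burgers profile `W̄(x₁,x₂) = ⟨x₂⟩ Ū(x₁⟨x₂⟩⁻³)`,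
with `⟨y⟩ = (1 + y²)^{1/2}`. -/
noncomputable def Wbar (Ub : ℝ → ℝ) (x₁ x₂ : ℝ) : ℝ :=
  Real.sqrt (1 + x₂ ^ 2) * Ub (x₁ / Real.sqrt (1 + x₂ ^ 2) ^ 3)

open Real

lemma sqrt_one_add_sq_pos (t : ℝ) : 0 < √(1 + t ^ 2) :=
  Real.sqrt_pos.mpr (by positivity)

lemma hasDerivAt_sqrt_one_add_sq (t : ℝ) :
    HasDerivAt (fun y : ℝ => √(1 + y ^ 2)) (t / √(1 + t ^ 2)) t := by
  have h := ((hasDerivAt_pow 2 t).const_add 1).sqrt (by positivity)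
  convert h using 1
  field_simp
  ring

lemma differentiable_Wbar {Ub : ℝ → ℝ} (hd : Differentiable ℝ Ub) :
    Differentiable ℝ (fun p : ℝ × ℝ => Wbar Ub p.1 p.2) := by
  have hsqrt : Differentiable ℝ (fun p : ℝ × ℝ => √(1 + p.2 ^ 2)) :=
    Differentiable.sqrt (by fun_prop) fun p => by positivity
  have hpow_ne : ∀ p : ℝ × ℝ, √(1 + p.2 ^ 2) ^ 3 ≠ 0 :=
    fun p => pow_ne_zero _ (sqrt_one_add_sq_pos p.2).ne'
  simp only [Wbar, div_eq_mul_inv]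
  exact hsqrt.mul (hd.comp (differentiable_fst.mul ((hsqrt.pow 3).inv hpow_ne)))

lemma hasDerivAt_Wbar_fst {Ub : ℝ → ℝ} {x₁ x₂ : ℝ}
    (hd : DifferentiableAt ℝ Ub (x₁ / √(1 + x₂ ^ 2) ^ 3)) :
    HasDerivAt (fun y₁ => Wbar Ub y₁ x₂)
      (deriv Ub (x₁ / √(1 + x₂ ^ 2) ^ 3) / √(1 + x₂ ^ 2) ^ 2) x₁ := by
  have hs := (sqrt_one_add_sq_pos x₂).ne'
  have h := (hd.hasDerivAt.comp x₁ ((hasDerivAt_id x₁).div_const _)).const_mul √(1 + x₂ ^ 2)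
  refine h.congr_deriv ?_
  field_simp

lemma hasDerivAt_Wbar_snd {Ub : ℝ → ℝ} {x₁ x₂ : ℝ}
    (hd : DifferentiableAt ℝ Ub (x₁ / √(1 + x₂ ^ 2) ^ 3)) :
    HasDerivAt (fun y₂ => Wbar Ub x₁ y₂)
      (x₂ / √(1 + x₂ ^ 2) * Ub (x₁ / √(1 + x₂ ^ 2) ^ 3)
        - 3 * x₁ * x₂ * deriv Ub (x₁ / √(1 + x₂ ^ 2) ^ 3) / √(1 + x₂ ^ 2) ^ 4) x₂ := by
  have hs := (sqrt_one_add_sq_pos x₂).ne'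
  have hcube := (hasDerivAt_sqrt_one_add_sq x₂).pow 3
  have hinner := (hasDerivAt_const x₂ x₁).div hcube (pow_ne_zero 3 hs)
  have h := (hasDerivAt_sqrt_one_add_sq x₂).mul (hd.hasDerivAt.comp x₂ hinner)
  refine h.congr_deriv ?_
  simp only [Function.comp_apply, Pi.div_apply, Pi.pow_apply]
  field_simp
  ring

lemma burgers_residual_Wbar {Ub : ℝ → ℝ} {x₁ x₂ : ℝ}
    (hd : DifferentiableAt ℝ Ub (x₁ / √(1 + x₂ ^ 2) ^ 3)) :
    -(1 / 2) * Wbar Ub x₁ x₂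
        + ((3 / 2) * x₁ + Wbar Ub x₁ x₂) * deriv (fun y₁ => Wbar Ub y₁ x₂) x₁
        + (1 / 2) * x₂ * deriv (fun y₂ => Wbar Ub x₁ y₂) x₂
      = (-(1 / 2) * Ub (x₁ / √(1 + x₂ ^ 2) ^ 3)
          + ((3 / 2) * (x₁ / √(1 + x₂ ^ 2) ^ 3) + Ub (x₁ / √(1 + x₂ ^ 2) ^ 3))
            * deriv Ub (x₁ / √(1 + x₂ ^ 2) ^ 3)) / √(1 + x₂ ^ 2) := by
  rw [(hasDerivAt_Wbar_fst hd).deriv, (hasDerivAt_Wbar_snd hd).deriv, Wbar]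
  have hs := (sqrt_one_add_sq_pos x₂).ne'
  have hs2 : √(1 + x₂ ^ 2) ^ 2 = 1 + x₂ ^ 2 := Real.sq_sqrt (by positivity)
  field_simp
  linear_combination (3 * x₁ * deriv Ub (x₁ / √(1 + x₂ ^ 2) ^ 3)
    - √(1 + x₂ ^ 2) ^ 3 * Ub (x₁ / √(1 + x₂ ^ 2) ^ 3)) * hs2

/-- If `Ū` is differentiable and solves the 1D self-similar Burgers equation
`−½Ū + ((3/2)y + Ū)Ū′ = 0`, then `W̄(x₁,x₂) = ⟨x₂⟩Ū(x₁⟨x₂⟩⁻³)` is differentiable on `ℝ²`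
and solves the 2D self-similar Burgers equation
`−½W̄ + ((3/2)x₁ + W̄)∂₁W̄ + ½x₂∂₂W̄ = 0`. -/
theorem two_dim_self_similar_burgers
    (Ub : ℝ → ℝ) (hd : Differentiable ℝ Ub)
    (heq : ∀ y : ℝ, -(1 / 2) * Ub y + ((3 / 2) * y + Ub y) * deriv Ub y = 0) :
    Differentiable ℝ (fun p : ℝ × ℝ => Wbar Ub p.1 p.2) ∧
    ∀ x₁ x₂ : ℝ,
      -(1 / 2) * Wbar Ub x₁ x₂
        + ((3 / 2) * x₁ + Wbar Ub x₁ x₂) * deriv (fun y₁ => Wbar Ub y₁ x₂) x₁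
        + (1 / 2) * x₂ * deriv (fun y₂ => Wbar Ub x₁ y₂) x₂ = 0 := by
  refine ⟨differentiable_Wbar hd, fun x₁ x₂ => ?_⟩
  rw [burgers_residual_Wbar (hd _), heq, zero_div]
end
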